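/- Let A be a complex Banach algebra, let N ≥ 2, and let K₁, …, K_{N−1} ∈ A satisfy ‖Kₗ‖ ≤ b for all l and [Kᵢ, Kⱼ] = 0 whenever |i − j| ≥ 2. Define O := Σ_{l odd} Kₗ and E := Σ_{l even} Kₗ (sums over 1 ≤ l ≤ N−1). Let t ≥ 0, let m ≥ 1 be an integer, set Δt := t/m, and suppose Δt·(‖E‖ + ‖O‖/2) ≤ 1. Assume ‖exp(sO)‖ ≤ 1, ‖exp(sE)‖ ≤ 1 and ‖exp(s(O+E))‖ ≤ 1 for all s ∈ [0,Δt]. Then the accumulated second-order Trotter–Suzuki error satisfies ‖exp(t(O+E)) − (exp((Δt/2)O)·exp(Δt·E)·exp((Δt/2)O))ᵐ‖ ≤ (t·b)³·N²/(2m²). -/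

import Mathlib

open NormedSpace

/-!
All exponentials in sight are contractions, so the `m`-step error telescopes to `m` times the
one-step error. For the one-step (Strang) error of `S v = P Q P`, `P = e^{vx}`, `Q = e^{vy}`,
against `e^{vL}`, `L = 2x + y`, Duhamel's formula gives `e^{τL} - S τ = ∫₀^τ e^{(τ-v)L} D v dv`
with the defect `D = L S - S' = P [x, Q] P + [y, P] Q P`. Both commutators expand into conjugates of
`[x, y]` with opposite signs, so their first-order parts cancel and
`‖D v‖ ≤ ‖[x, y]‖ (‖x‖ + ‖y‖) v²`, whence a one-step error `O(τ³)`. In a nearest-neighbour chain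
an odd term fails to commute with at most two even ones, so `‖[O, E]‖ ≤ 2 N b²`, while
`‖O‖ + ‖E‖ ≤ N b`. Instead of integrals, every estimate is the mean-value inequality
`‖f b - f a‖ ≤ B b - B a` for `‖f'‖ ≤ B'`, applied to a suitable interpolating `f`.
-/

theorem norm_image_sub_le_of_norm_deriv_le_deriv_boundary {E : Type*} [NormedAddCommGroup E]
    [NormedSpace ℝ E] {f f' : ℝ → E} {B B' : ℝ → ℝ} {a b : ℝ} (hab : a ≤ b)
    (hf : ∀ x, HasDerivAt f (f' x) x) (hB : ∀ x, HasDerivAt B (B' x) x)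
    (bound : ∀ x ∈ Set.Ico a b, ‖f' x‖ ≤ B' x) : ‖f b - f a‖ ≤ B b - B a :=
  image_norm_le_of_norm_deriv_right_le_deriv_boundary (f := fun x => f x - f a)
    (fun x _ => ((hf x).sub_const (f a)).continuousAt.continuousWithinAt)
    (fun x _ => ((hf x).sub_const (f a)).hasDerivWithinAt) (by simp)
    (fun x => (hB x).sub_const (B a)) bound ⟨hab, le_rfl⟩

theorem norm_mul_sub_mul_le_of_norm_le_one {R : Type*} [NormedRing R] {a b c d : R}
    (hb : ‖b‖ ≤ 1) (hc : ‖c‖ ≤ 1) : ‖a * b - c * d‖ ≤ ‖a - c‖ + ‖b - d‖ := by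
  calc ‖a * b - c * d‖ = ‖(a - c) * b + c * (b - d)‖ := by noncomm_ring
    _ ≤ ‖a - c‖ * ‖b‖ + ‖c‖ * ‖b - d‖ :=
      (norm_add_le _ _).trans (add_le_add (norm_mul_le _ _) (norm_mul_le _ _))
    _ ≤ ‖a - c‖ + ‖b - d‖ :=
      add_le_add (mul_le_of_le_one_right (norm_nonneg _) hb)
        (mul_le_of_le_one_left (norm_nonneg _) hc)

theorem norm_pow_sub_pow_le_of_norm_le_one {R : Type*} [NormedRing R] {a b : R}
    (ha : ‖a‖ ≤ 1) (hb : ‖b‖ ≤ 1) (m : ℕ) : ‖a ^ m - b ^ m‖ ≤ m * ‖a - b‖ := by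
  rcases m.eq_zero_or_pos with rfl | hm
  · simp
  induction m, hm using Nat.le_induction with
  | base => simp
  | succ n hn ih =>
    have han : ‖a ^ n‖ ≤ 1 := (norm_pow_le' a hn).trans (pow_le_one₀ (norm_nonneg a) ha)
    calc ‖a ^ (n + 1) - b ^ (n + 1)‖ = ‖a * a ^ n - b * b ^ n‖ := by rw [pow_succ', pow_succ']
      _ ≤ ‖a - b‖ + ‖a ^ n - b ^ n‖ := norm_mul_sub_mul_le_of_norm_le_one han hb
      _ ≤ ‖a - b‖ + n * ‖a - b‖ := by gcongr
      _ = (n + 1 : ℕ) * ‖a - b‖ := by push_cast; ring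

section RealBanachAlgebra

open Set

variable {A : Type*} [NormedRing A] [NormedAlgebra ℝ A]

def ExpContractiveOn (x : A) (τ : ℝ) : Prop := ∀ s ∈ Icc (0 : ℝ) τ, ‖exp (s • x)‖ ≤ 1

theorem ExpContractiveOn.half {x : A} {τ : ℝ} (hx : ExpContractiveOn x τ) :
    ExpContractiveOn ((2 : ℝ)⁻¹ • x) τ := by
  intro s ⟨hs0, hsτ⟩
  rw [smul_smul]
  exact hx _ ⟨by positivity, by linarith⟩

variable [CompleteSpace A]

theorem hasDerivAt_exp_sub_smul (x : A) (s u : ℝ) :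
    HasDerivAt (fun v : ℝ => exp ((s - v) • x)) (-(exp ((s - u) • x) * x)) u := by
  simpa [Function.comp_def] using
    (hasDerivAt_exp_smul_const x (s - u)).scomp u ((hasDerivAt_id u).const_sub s)

theorem ExpContractiveOn.norm_exp_smul_sub_exp_smul_le {x : A} {τ u s : ℝ}
    (hx : ExpContractiveOn x τ) (hu : 0 ≤ u) (hus : u ≤ s) (hs : s ≤ τ) :
    ‖exp (s • x) - exp (u • x)‖ ≤ (s - u) * ‖x‖ := by
  have := norm_image_sub_le_of_norm_deriv_le_deriv_boundary hus
    (hasDerivAt_exp_smul_const' x) (fun v => hasDerivAt_mul_const (x := v) ‖x‖)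
    fun v ⟨huv, hvs⟩ => (norm_mul_le _ _).trans <|
      mul_le_of_le_one_right (norm_nonneg x) (hx v ⟨hu.trans huv, hvs.le.trans hs⟩)
  rwa [← sub_mul] at this

theorem norm_exp_commutator_exp_sub_le {x y : A} {τ s u : ℝ}
    (hx : ExpContractiveOn x τ) (hy : ExpContractiveOn y τ) (hu : 0 ≤ u) (hus : u ≤ s)
    (hs : s ≤ τ) :
    ‖exp (s • x) * exp ((s - u) • y) * (x * y - y * x) * exp (u • y) * exp (s • x)
        - exp ((s - u) • x) * (x * y - y * x) * exp (u • x) * exp (s • y) * exp (s • x)‖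
      ≤ 2 * ‖x * y - y * x‖ * (u * ‖x‖ + (s - u) * ‖y‖) := by
  set C := x * y - y * x
  have h0 : (0 : ℝ) ≤ s - u := sub_nonneg.2 hus
  have hsu : s - u ≤ τ := by linarith
  have hleft : ‖exp (s • x) * exp ((s - u) • y) - exp ((s - u) • x) * 1‖
      ≤ u * ‖x‖ + (s - u) * ‖y‖ := by
    refine (norm_mul_sub_mul_le_of_norm_le_one (hy _ ⟨h0, hsu⟩) (hx _ ⟨h0, hsu⟩)).trans ?_
    have h1 := hx.norm_exp_smul_sub_exp_smul_le h0 (sub_le_self s hu) hs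
    have h2 := hy.norm_exp_smul_sub_exp_smul_le le_rfl h0 hsu
    simp only [zero_smul, exp_zero, sub_sub_cancel, sub_zero] at h1 h2
    linarith
  have hright : ‖1 * exp (u • y) - exp (u • x) * exp (s • y)‖ ≤ u * ‖x‖ + (s - u) * ‖y‖ := by
    refine (norm_mul_sub_mul_le_of_norm_le_one (hy _ ⟨hu, hus.trans hs⟩)
      (hx _ ⟨hu, hus.trans hs⟩)).trans ?_
    have h1 := hx.norm_exp_smul_sub_exp_smul_le le_rfl hu (hus.trans hs)
    have h2 := hy.norm_exp_smul_sub_exp_smul_le hu hus hs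
    rw [norm_sub_rev] at h1 h2
    simp only [zero_smul, exp_zero, sub_zero] at h1
    linarith
  have hP : ‖exp (s • x)‖ ≤ 1 := hx _ ⟨hu.trans hus, hs⟩
  have hP' : ‖exp ((s - u) • x)‖ ≤ 1 := hx _ ⟨h0, hsu⟩
  have hQuP : ‖exp (u • y) * exp (s • x)‖ ≤ 1 :=
    (norm_mul_le _ _).trans (mul_le_one₀ (hy _ ⟨hu, hus.trans hs⟩) (norm_nonneg _) hP)
  set ε := u * ‖x‖ + (s - u) * ‖y‖
  calc _ = ‖(exp (s • x) * exp ((s - u) • y) - exp ((s - u) • x) * 1) * C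
          * (exp (u • y) * exp (s • x))
        + exp ((s - u) • x) * C * (1 * exp (u • y) - exp (u • x) * exp (s • y))
          * exp (s • x)‖ := by congr 1; noncomm_ring
    _ ≤ ε * ‖C‖ * 1 + 1 * ‖C‖ * ε * 1 := by
      refine (norm_add_le _ _).trans (add_le_add (norm_mul₃_le.trans ?_) ?_)
      · gcongr
      · exact norm_mul_le_of_le (norm_mul₃_le.trans (by gcongr)) hP
    _ = 2 * ‖C‖ * ε := by ring

theorem norm_symmetric_product_defect_le {x y : A} {τ s : ℝ}
    (hx : ExpContractiveOn x τ) (hy : ExpContractiveOn y τ) (hs : 0 ≤ s) (hsτ : s ≤ τ) :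
    ‖(x + x + y) * (exp (s • x) * exp (s • y) * exp (s • x))
        - (x * (exp (s • x) * exp (s • y) * exp (s • x))
          + exp (s • x) * y * exp (s • y) * exp (s • x)
          + exp (s • x) * exp (s • y) * exp (s • x) * x)‖
      ≤ ‖x * y - y * x‖ * (‖x‖ + ‖y‖) * s ^ 2 := by
  set P := exp (s • x)
  set Q := exp (s • y)
  -- `G s - G 0` is the defect, and `G'` is the difference of the two conjugated commutators.
  let G : ℝ → A := fun u => P * exp ((s - u) • y) * x * exp (u • y) * P
    + exp ((s - u) • x) * y * exp (u • x) * Q * P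
  have hG : ∀ u, HasDerivAt G (P * exp ((s - u) • y) * (x * y - y * x) * exp (u • y) * P
      - exp ((s - u) • x) * (x * y - y * x) * exp (u • x) * Q * P) u := by
    intro u
    have h1 := ((((hasDerivAt_exp_sub_smul y s u).const_mul P).mul_const x).mul
      (hasDerivAt_exp_smul_const' y u)).mul_const P
    have h2 := ((((hasDerivAt_exp_sub_smul x s u).mul_const y).mul
      (hasDerivAt_exp_smul_const' x u)).mul_const Q).mul_const P
    exact (h1.add h2).congr_deriv (by noncomm_ring)
  have hxP : x * P = P * x := ((Commute.refl x).smul_right s).exp_right.eq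
  have hdefect : (x + x + y) * (P * Q * P) - (x * (P * Q * P) + P * y * Q * P + P * Q * P * x)
      = G s - G 0 := by
    simp only [G, sub_self, sub_zero, zero_smul, exp_zero]
    calc _ = x * P * Q * P + y * P * Q * P - P * y * Q * P - P * Q * (P * x) := by noncomm_ring
      _ = P * x * Q * P + y * P * Q * P - P * y * Q * P - P * Q * (x * P) := by rw [hxP]
      _ = _ := by noncomm_ring
  have hB : ∀ u : ℝ, HasDerivAt (fun u => ‖x * y - y * x‖ * (‖x‖ * u ^ 2 + ‖y‖ * (2 * s * u - u ^ 2)))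
      (2 * ‖x * y - y * x‖ * (u * ‖x‖ + (s - u) * ‖y‖)) u := fun u =>
    ((((hasDerivAt_pow 2 u).const_mul ‖x‖).add ((((hasDerivAt_id u).const_mul (2 * s)).sub
      (hasDerivAt_pow 2 u)).const_mul ‖y‖)).const_mul _).congr_deriv (by simp only [Nat.cast_ofNat, Nat.add_one_sub_one]; ring)
  rw [hdefect]
  refine (norm_image_sub_le_of_norm_deriv_le_deriv_boundary hs hG hB fun u ⟨hu, hus⟩ =>
    norm_exp_commutator_exp_sub_le hx hy hu hus.le hsτ).trans_eq ?_
  ring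

theorem norm_exp_sub_symmetric_product_le {x y : A} {τ : ℝ} (hx : ExpContractiveOn x τ)
    (hy : ExpContractiveOn y τ) (hxy : ExpContractiveOn (x + x + y) τ) (hτ : 0 ≤ τ) :
    ‖exp (τ • (x + x + y)) - exp (τ • x) * exp (τ • y) * exp (τ • x)‖
      ≤ ‖x * y - y * x‖ * (‖x‖ + ‖y‖) * τ ^ 3 / 3 := by
  set κ := ‖x * y - y * x‖ * (‖x‖ + ‖y‖)
  let S : ℝ → A := fun v => exp (v • x) * exp (v • y) * exp (v • x)
  let D : ℝ → A := fun v => (x + x + y) * S v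
    - (x * S v + exp (v • x) * y * exp (v • y) * exp (v • x) + S v * x)
  have hf : ∀ v, HasDerivAt (fun v => exp ((τ - v) • (x + x + y)) * S v)
      (-(exp ((τ - v) • (x + x + y)) * D v)) v := fun v =>
    ((hasDerivAt_exp_sub_smul _ τ v).mul (((hasDerivAt_exp_smul_const' x v).mul
      (hasDerivAt_exp_smul_const' y v)).mul (hasDerivAt_exp_smul_const x v))).congr_deriv
      (by simp only [S, D, Pi.mul_apply]; noncomm_ring)
  have hB : ∀ v : ℝ, HasDerivAt (fun v => κ * v ^ 3 / 3) (κ * v ^ 2) v := fun v =>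
    (((hasDerivAt_pow 3 v).const_mul κ).div_const 3).congr_deriv (by simp only [Nat.cast_ofNat, Nat.add_one_sub_one]; ring)
  have bound : ∀ v ∈ Ico 0 τ, ‖-(exp ((τ - v) • (x + x + y)) * D v)‖ ≤ κ * v ^ 2 := by
    intro v ⟨hv, hvτ⟩
    rw [norm_neg]
    exact (norm_mul_le _ _).trans <| (mul_le_of_le_one_left (norm_nonneg _)
      (hxy _ ⟨by linarith, by linarith⟩)).trans (norm_symmetric_product_defect_le hx hy hv hvτ.le)
  have := norm_image_sub_le_of_norm_deriv_le_deriv_boundary hτ hf hB bound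
  simp only [sub_self, sub_zero, zero_smul, exp_zero, one_mul, mul_one, S] at this
  rw [norm_sub_rev]
  linarith

theorem norm_exp_sub_strang_product_le {x y : A} {τ : ℝ} (hx : ExpContractiveOn x τ)
    (hy : ExpContractiveOn y τ) (hxy : ExpContractiveOn (x + y) τ) (hτ : 0 ≤ τ) :
    ‖exp (τ • (x + y)) - exp ((τ / 2) • x) * exp (τ • y) * exp ((τ / 2) • x)‖
      ≤ ‖x * y - y * x‖ * (‖x‖ / 2 + ‖y‖) * τ ^ 3 / 6 := by
  have hhalf : (2 : ℝ)⁻¹ • x + (2 : ℝ)⁻¹ • x = x := by rw [← add_smul]; norm_num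
  have h := norm_exp_sub_symmetric_product_le hx.half hy (by rwa [hhalf]) hτ
  rw [hhalf, smul_smul, ← div_eq_mul_inv, smul_mul_assoc, mul_smul_comm, ← smul_sub,
    norm_smul, norm_smul] at h
  refine h.trans_eq ?_
  simp only [norm_inv, Real.norm_ofNat]
  ring

theorem exp_natCast_mul_smul (x : A) (τ : ℝ) (m : ℕ) : exp ((m * τ) • x) = exp (τ • x) ^ m := by
  let _ : NormedAlgebra ℚ A := .restrictScalars ℚ ℝ A
  rw [mul_smul, Nat.cast_smul_eq_nsmul, exp_nsmul]

end RealBanachAlgebra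

section NearestNeighbor

open Finset

variable {A : Type*} [NormedRing A]

theorem norm_sum_filter_odd_add_norm_sum_filter_even_le (s : Finset ℕ) (K : ℕ → A) :
    ‖∑ l ∈ s.filter (fun l => Odd l), K l‖ + ‖∑ l ∈ s.filter (fun l => Even l), K l‖
      ≤ ∑ l ∈ s, ‖K l‖ := by
  rw [← sum_filter_add_sum_filter_not s (fun l => Odd l)]
  simp only [Nat.not_odd_iff_even]
  exact add_le_add (norm_sum_le _ _) (norm_sum_le _ _)

theorem norm_sum_odd_add_norm_sum_even_le (N : ℕ) (K : ℕ → A) {b : ℝ} (hb0 : 0 ≤ b)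
    (hb : ∀ l ∈ Icc 1 (N - 1), ‖K l‖ ≤ b) :
    ‖∑ l ∈ (Icc 1 (N - 1)).filter (fun l => Odd l), K l‖
      + ‖∑ l ∈ (Icc 1 (N - 1)).filter (fun l => Even l), K l‖ ≤ N * b := by
  refine (norm_sum_filter_odd_add_norm_sum_filter_even_le _ K).trans <|
    (sum_le_card_nsmul _ _ _ hb).trans ?_
  rw [nsmul_eq_mul, Nat.card_Icc]
  gcongr
  exact_mod_cast (by omega : N - 1 + 1 - 1 ≤ N)

theorem two_mul_card_filter_odd_Icc_le (N : ℕ) :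
    2 * #((Icc 1 (N - 1)).filter (fun l => Odd l)) ≤ N := by
  have hmaps : ∀ l ∈ (Icc 1 (N - 1)).filter (fun l => Odd l), l / 2 ∈ range (N / 2) := by
    intro l hl
    simp only [mem_filter, mem_Icc, Nat.odd_iff] at hl
    rw [mem_range]
    omega
  have hinj : Set.InjOn (· / 2) ((Icc 1 (N - 1)).filter (fun l => Odd l) : Set ℕ) := by
    intro k hk l hl hkl
    simp only [coe_filter, Set.mem_ofPred_eq, Nat.odd_iff] at hk hl hkl
    omega
  have := card_le_card_of_injOn _ hmaps hinj
  rw [card_range] at this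
  omega

theorem norm_sum_commutator_le_of_commute_of_two_le {K : ℕ → A} {b : ℝ} {s t : Finset ℕ}
    (hb : ∀ k ∈ s, ‖K k‖ ≤ b)
    (hcomm : ∀ i ∈ s, ∀ j ∈ s, 2 ≤ |(i : ℤ) - (j : ℤ)| → K i * K j = K j * K i)
    {l : ℕ} (hl : l ∈ s) (hts : t ⊆ s) (hlt : l ∉ t) :
    ‖∑ k ∈ t, (K l * K k - K k * K l)‖ ≤ 4 * b ^ 2 := by
  have hneighbors : ∑ k ∈ t.filter (fun k => k + 1 = l ∨ k = l + 1), (K l * K k - K k * K l)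
      = ∑ k ∈ t, (K l * K k - K k * K l) := by
    refine sum_filter_of_ne fun k hk hne => by_contra fun hfar => hne ?_
    have hkl : k ≠ l := fun h => hlt (h ▸ hk)
    rw [sub_eq_zero, hcomm l hl k (hts hk) (by rw [le_abs]; omega)]
  have hcard : #(t.filter (fun k => k + 1 = l ∨ k = l + 1)) ≤ 2 := by
    refine (card_le_card (t := {l - 1, l + 1}) fun k hk => ?_).trans card_le_two
    simp only [mem_filter] at hk
    simp only [mem_insert, mem_singleton]
    omega
  have hterm : ∀ k ∈ t.filter (fun k => k + 1 = l ∨ k = l + 1),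
      ‖K l * K k - K k * K l‖ ≤ 2 * b ^ 2 := by
    intro k hk
    have hkb := hb k (hts (mem_filter.1 hk).1)
    have hlb := hb l hl
    calc ‖K l * K k - K k * K l‖ ≤ ‖K l‖ * ‖K k‖ + ‖K k‖ * ‖K l‖ :=
          (norm_sub_le _ _).trans (add_le_add (norm_mul_le _ _) (norm_mul_le _ _))
      _ ≤ 2 * b ^ 2 := by nlinarith [norm_nonneg (K l), norm_nonneg (K k)]
  rw [← hneighbors]
  calc _ ≤ #(t.filter (fun k => k + 1 = l ∨ k = l + 1)) * (2 * b ^ 2) :=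
        norm_sum_le_of_le _ hterm |>.trans_eq (by rw [sum_const, nsmul_eq_mul])
    _ ≤ 2 * (2 * b ^ 2) := by gcongr; exact_mod_cast hcard
    _ = 4 * b ^ 2 := by ring

theorem norm_commutator_sum_odd_sum_even_le (N : ℕ) (K : ℕ → A) (b : ℝ)
    (hb : ∀ l ∈ Icc 1 (N - 1), ‖K l‖ ≤ b)
    (hcomm : ∀ i ∈ Icc 1 (N - 1), ∀ j ∈ Icc 1 (N - 1),
      2 ≤ |(i : ℤ) - (j : ℤ)| → K i * K j = K j * K i) :
    ‖(∑ l ∈ (Icc 1 (N - 1)).filter (fun l => Odd l), K l)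
        * (∑ l ∈ (Icc 1 (N - 1)).filter (fun l => Even l), K l)
      - (∑ l ∈ (Icc 1 (N - 1)).filter (fun l => Even l), K l)
        * (∑ l ∈ (Icc 1 (N - 1)).filter (fun l => Odd l), K l)‖ ≤ 2 * N * b ^ 2 := by
  rw [sum_mul_sum, sum_mul_sum, sum_comm (s := (Icc 1 (N - 1)).filter (fun l => Even l)),
    ← sum_sub_distrib]
  simp_rw [← sum_sub_distrib]
  have hodd : (2 * #((Icc 1 (N - 1)).filter (fun l => Odd l)) : ℝ) ≤ N := by
    exact_mod_cast two_mul_card_filter_odd_Icc_le N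
  calc _ ≤ #((Icc 1 (N - 1)).filter (fun l => Odd l)) * (4 * b ^ 2) := by
        refine norm_sum_le_of_le _ (fun l hl => ?_) |>.trans_eq (by rw [sum_const, nsmul_eq_mul])
        refine norm_sum_commutator_le_of_commute_of_two_le hb hcomm (mem_filter.1 hl).1
          (filter_subset _ _) fun hl' => ?_
        exact Nat.not_even_iff_odd.2 (mem_filter.1 hl).2 (mem_filter.1 hl').2
    _ ≤ 2 * N * b ^ 2 := by nlinarith [sq_nonneg b]

end NearestNeighbor

theorem trotter_accumulated_nearest_neighbor_bound_general {A : Type*} [NormedRing A]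
    [NormedAlgebra ℂ A] [CompleteSpace A] (N : ℕ) (hN : 2 ≤ N) (K : ℕ → A) (b : ℝ)
    (hb : ∀ l ∈ Finset.Icc 1 (N - 1), ‖K l‖ ≤ b)
    (hcomm : ∀ i ∈ Finset.Icc 1 (N - 1), ∀ j ∈ Finset.Icc 1 (N - 1),
      2 ≤ |(i : ℤ) - (j : ℤ)| → K i * K j = K j * K i)
    (O E : A)
    (hO : O = ∑ l ∈ (Finset.Icc 1 (N - 1)).filter (fun l => Odd l), K l)
    (hE : E = ∑ l ∈ (Finset.Icc 1 (N - 1)).filter (fun l => Even l), K l)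
    (t : ℝ) (ht : 0 ≤ t) (m : ℕ) (hm : 1 ≤ m) (Δt : ℝ) (hΔt : Δt = t / m)
    (hOexp : ∀ s ∈ Set.Icc (0:ℝ) Δt, ‖exp (s • O)‖ ≤ 1)
    (hEexp : ∀ s ∈ Set.Icc (0:ℝ) Δt, ‖exp (s • E)‖ ≤ 1)
    (hOEexp : ∀ s ∈ Set.Icc (0:ℝ) Δt, ‖exp (s • (O + E))‖ ≤ 1) :
    ‖exp (t • (O + E)) -
        (exp ((Δt / 2) • O) * exp (Δt • E) * exp ((Δt / 2) • O)) ^ m‖ ≤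
      (t * b) ^ 3 * (N : ℝ) ^ 2 / (2 * (m : ℝ) ^ 2) := by
  have hm0 : (0 : ℝ) < m := by exact_mod_cast hm
  have hΔt0 : 0 ≤ Δt := hΔt ▸ by positivity
  have hb0 : 0 ≤ b := (norm_nonneg _).trans (hb 1 (Finset.mem_Icc.2 ⟨le_rfl, by omega⟩))
  have hnorm : ‖O‖ / 2 + ‖E‖ ≤ N * b := by
    linarith [norm_nonneg O, hO ▸ hE ▸ norm_sum_odd_add_norm_sum_even_le N K hb0 hb]
  have hcommOE : ‖O * E - E * O‖ ≤ 2 * N * b ^ 2 :=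
    hO ▸ hE ▸ norm_commutator_sum_odd_sum_even_le N K b hb hcomm
  have hstrang_le_one : ‖exp ((Δt / 2) • O) * exp (Δt • E) * exp ((Δt / 2) • O)‖ ≤ 1 := by
    have hO' := hOexp (Δt / 2) ⟨by positivity, by linarith⟩
    exact norm_mul₃_le.trans (mul_le_one₀ (mul_le_one₀ hO' (norm_nonneg _)
      (hEexp Δt ⟨hΔt0, le_rfl⟩)) (norm_nonneg _) hO')
  calc _ = ‖exp (Δt • (O + E)) ^ m
        - (exp ((Δt / 2) • O) * exp (Δt • E) * exp ((Δt / 2) • O)) ^ m‖ := by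
        rw [← exp_natCast_mul_smul, hΔt, mul_div_cancel₀ _ hm0.ne']
    _ ≤ m * (‖O * E - E * O‖ * (‖O‖ / 2 + ‖E‖) * Δt ^ 3 / 6) :=
        (norm_pow_sub_pow_le_of_norm_le_one (hOEexp Δt ⟨hΔt0, le_rfl⟩) hstrang_le_one m).trans
          (by gcongr; exact norm_exp_sub_strang_product_le hOexp hEexp hOEexp hΔt0)
    _ ≤ m * (2 * N * b ^ 2 * (N * b) * Δt ^ 3 / 6) := by gcongr
    _ = (t * b) ^ 3 * (N : ℝ) ^ 2 / (3 * (m : ℝ) ^ 2) := by rw [hΔt]; field_simp; ring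
    _ ≤ (t * b) ^ 3 * (N : ℝ) ^ 2 / (2 * (m : ℝ) ^ 2) := by gcongr; norm_num

/-- **Accumulated second-order Trotter–Suzuki error for a nearest-neighbor
Liouvillian** (Trotter–Suzuki part of the trace-norm certificate, Theorem 1).
If `K₁, …, K_{N−1}` are elements of a complex Banach algebra with `‖Kₗ‖ ≤ b`
that commute whenever `|i − j| ≥ 2`, `O` and `E` are the odd and even parts,
`t ≥ 0`, `m ≥ 1`, `Δt := t/m` satisfies `Δt(‖E‖ + ‖O‖/2) ≤ 1`, and the
exponentials `exp(sO)`, `exp(sE)`, `exp(s(O+E))` are contractions for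
`s ∈ [0,Δt]`, then
`‖exp(t(O+E)) − (exp((Δt/2)O)·exp(ΔtE)·exp((Δt/2)O))ᵐ‖ ≤ (tb)³N²/(2m²)`. -/
theorem trotter_accumulated_nearest_neighbor_bound {A : Type*} [NormedRing A]
    [NormedAlgebra ℂ A] [CompleteSpace A] (N : ℕ) (hN : 2 ≤ N) (K : ℕ → A) (b : ℝ)
    (hb : ∀ l ∈ Finset.Icc 1 (N - 1), ‖K l‖ ≤ b)
    (hcomm : ∀ i ∈ Finset.Icc 1 (N - 1), ∀ j ∈ Finset.Icc 1 (N - 1),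
      2 ≤ |(i : ℤ) - (j : ℤ)| → K i * K j = K j * K i)
    (O E : A)
    (hO : O = ∑ l ∈ (Finset.Icc 1 (N - 1)).filter (fun l => Odd l), K l)
    (hE : E = ∑ l ∈ (Finset.Icc 1 (N - 1)).filter (fun l => Even l), K l)
    (t : ℝ) (ht : 0 ≤ t) (m : ℕ) (hm : 1 ≤ m) (Δt : ℝ) (hΔt : Δt = t / m)
    (hstep : Δt * (‖E‖ + ‖O‖ / 2) ≤ 1)
    (hOexp : ∀ s ∈ Set.Icc (0:ℝ) Δt, ‖exp (s • O)‖ ≤ 1)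
    (hEexp : ∀ s ∈ Set.Icc (0:ℝ) Δt, ‖exp (s • E)‖ ≤ 1)
    (hOEexp : ∀ s ∈ Set.Icc (0:ℝ) Δt, ‖exp (s • (O + E))‖ ≤ 1) :
    ‖exp (t • (O + E)) -
        (exp ((Δt / 2) • O) * exp (Δt • E) * exp ((Δt / 2) • O)) ^ m‖ ≤
      (t * b) ^ 3 * (N : ℝ) ^ 2 / (2 * (m : ℝ) ^ 2) :=
  trotter_accumulated_nearest_neighbor_bound_general N hN K b hb hcomm O E hO hE t ht m hm Δt hΔt
    hOexp hEexp hOEexp
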